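/- arXiv:1407.5552 — 9 statements merged into one kernel-verified Lean document; each statement's English description precedes it below -/
import Mathlib

section
/- For every positive integer n, the number q(n) of partitions of n into odd parts satisfies q(n) ≤ F_n, where F_n is the n-th Fibonacci number. -/
/-- `q n` is the number of partitions of `n` into odd parts. -/
def q (n : ℕ) : ℕ := (Nat.Partition.odds n).card

/-!
Split the odd partitions of `n + 3` according to whether `1` is a part. Deleting a part `1` leaves
an odd partition of `n + 2`. If `1` is not a part, every part is at least `3`; lowering a smallest
part by `2` gives an odd partition of `n + 1` in which the lowered part is still a smallest one, so
raising the smallest part by `2` undoes it. Hence `q (n + 3) ≤ q (n + 2) + q (n + 1)`, and with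
`q 1 = q 2 = 1` the Fibonacci bound follows by induction.
-/

open Finset

namespace Nat.Partition

variable {n : ℕ}

lemma mem_odds {p : n.Partition} : p ∈ odds n ↔ ∀ i ∈ p.parts, ¬Even i := by
  simp [odds, restricted]

lemma parts_eq_replicate_of_mem_odds {p : n.Partition} (hp : p ∈ odds n) (hn : n < 3) :
    p.parts = Multiset.replicate n 1 := by
  have h_one : ∀ i ∈ p.parts, i = 1 := fun i hi ↦ by
    have := p.le_of_mem_parts hi
    have := p.parts_pos hi
    have := Nat.not_even_iff.mp (mem_odds.mp hp i hi)
    omega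
  have h_rep := Multiset.eq_replicate_card.mpr h_one
  have h_card : Multiset.card p.parts = n := by
    have h_sum := p.parts_sum
    rwa [h_rep, Multiset.sum_replicate, smul_eq_mul, mul_one] at h_sum
  rwa [h_card] at h_rep

lemma card_odds_le_one (hn : n < 3) : #(odds n) ≤ 1 :=
  card_le_one.mpr fun p hp r hr ↦ Partition.ext <| by
    rw [parts_eq_replicate_of_mem_odds hp hn, parts_eq_replicate_of_mem_odds hr hn]

lemma card_filter_mem_parts_odds_le {a : ℕ} (ha1 : 1 ≤ a) (ha : a ≤ n) :
    #{p ∈ odds n | a ∈ p.parts} ≤ #(odds (n - a)) := by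
  let e := partitionWithPartEquiv ha1 ha
  refine card_le_card_of_surjOn (fun r ↦ (e.symm r).1) fun p hp ↦ ?_
  obtain ⟨hp_odd, h_mem⟩ := mem_filter.mp hp
  refine ⟨e ⟨p, h_mem⟩, mem_odds.mpr fun i hi ↦ ?_, by simp⟩
  exact mem_odds.mp hp_odd i (Multiset.mem_of_mem_erase (by simpa [e] using hi))

lemma parts_ne_zero (p : (n + 1).Partition) : p.parts ≠ 0 := by
  intro h
  simpa [h] using p.parts_sum

def minPart (p : (n + 1).Partition) : ℕ :=
  p.parts.toFinset.min' (Multiset.toFinset_nonempty.mpr p.parts_ne_zero)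

lemma minPart_mem (p : (n + 1).Partition) : p.minPart ∈ p.parts :=
  Multiset.mem_toFinset.mp (min'_mem _ _)

lemma minPart_le {p : (n + 1).Partition} {i : ℕ} (hi : i ∈ p.parts) : p.minPart ≤ i :=
  min'_le _ _ (Multiset.mem_toFinset.mpr hi)

lemma minPart_eq_of_mem {p : (n + 1).Partition} {a : ℕ} (ha : a ∈ p.parts)
    (h_le : ∀ i ∈ p.parts, a ≤ i) : p.minPart = a :=
  (minPart_le ha).antisymm (h_le _ p.minPart_mem)

def addTwoToMinPart (p : (n + 1).Partition) : (n + 3).Partition where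
  parts := (p.minPart + 2) ::ₘ p.parts.erase p.minPart
  parts_pos := by
    intro i hi
    rcases Multiset.mem_cons.mp hi with rfl | hi
    · omega
    · exact p.parts_pos (Multiset.mem_of_mem_erase hi)
  parts_sum := by
    have := congrArg Multiset.sum (Multiset.cons_erase p.minPart_mem)
    simp only [Multiset.sum_cons, p.parts_sum] at this ⊢
    omega

def subTwoFromMinPart (p : (n + 3).Partition) (h : 2 < p.minPart) : (n + 1).Partition where
  parts := (p.minPart - 2) ::ₘ p.parts.erase p.minPart
  parts_pos := by
    intro i hi
    rcases Multiset.mem_cons.mp hi with rfl | hi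
    · omega
    · exact p.parts_pos (Multiset.mem_of_mem_erase hi)
  parts_sum := by
    have := congrArg Multiset.sum (Multiset.cons_erase p.minPart_mem)
    simp only [Multiset.sum_cons, p.parts_sum] at this ⊢
    omega

lemma minPart_subTwoFromMinPart (p : (n + 3).Partition) (h : 2 < p.minPart) :
    (p.subTwoFromMinPart h).minPart = p.minPart - 2 := by
  refine minPart_eq_of_mem (Multiset.mem_cons_self _ _) fun i hi ↦ ?_
  rcases Multiset.mem_cons.mp hi with rfl | hi
  · rfl
  · exact (Nat.sub_le _ _).trans (minPart_le (Multiset.mem_of_mem_erase hi))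

lemma addTwoToMinPart_subTwoFromMinPart (p : (n + 3).Partition) (h : 2 < p.minPart) :
    (p.subTwoFromMinPart h).addTwoToMinPart = p := by
  ext1
  simp only [addTwoToMinPart, minPart_subTwoFromMinPart, Nat.sub_add_cancel h.le]
  simp [subTwoFromMinPart, Multiset.cons_erase p.minPart_mem]

lemma card_filter_one_notMem_parts_odds_le :
    #{p ∈ odds (n + 3) | 1 ∉ p.parts} ≤ #(odds (n + 1)) := by
  refine card_le_card_of_surjOn addTwoToMinPart fun p hp ↦ ?_
  obtain ⟨hp_odd, h_one⟩ := mem_filter.mp hp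
  rw [mem_odds] at hp_odd
  have h_min : 2 < p.minPart := by
    have := p.parts_pos p.minPart_mem
    have := Nat.not_even_iff.mp (hp_odd _ p.minPart_mem)
    have : p.minPart ≠ 1 := fun h ↦ h_one (h ▸ p.minPart_mem)
    omega
  refine ⟨p.subTwoFromMinPart h_min, mem_odds.mpr fun i hi ↦ ?_,
    addTwoToMinPart_subTwoFromMinPart p h_min⟩
  rcases Multiset.mem_cons.mp hi with rfl | hi
  · have := Nat.not_even_iff.mp (hp_odd _ p.minPart_mem)
    rw [Nat.not_even_iff]
    omega
  · exact hp_odd i (Multiset.mem_of_mem_erase hi)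

lemma card_odds_add_three_le : #(odds (n + 3)) ≤ #(odds (n + 2)) + #(odds (n + 1)) := by
  rw [← card_filter_add_card_filter_not (fun p : (n + 3).Partition ↦ 1 ∈ p.parts)]
  exact add_le_add (card_filter_mem_parts_odds_le le_add_self (by omega))
    card_filter_one_notMem_parts_odds_le

end Nat.Partition

theorem q_le_fib (n : ℕ) (hn : 0 < n) : q n ≤ Nat.fib n := by
  suffices h : ∀ n, q (n + 1) ≤ Nat.fib (n + 1) from Nat.succ_pred_eq_of_pos hn ▸ h _
  intro n
  induction n using Nat.twoStepInduction with
  | zero => exact Nat.Partition.card_odds_le_one (by norm_num)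
  | one => exact Nat.Partition.card_odds_le_one (by norm_num)
  | more n ih₀ ih₁ =>
    calc q (n + 3) ≤ q (n + 2) + q (n + 1) := Nat.Partition.card_odds_add_three_le
      _ ≤ Nat.fib (n + 2) + Nat.fib (n + 1) := add_le_add ih₁ ih₀
      _ = Nat.fib (n + 3) := (add_comm _ _).trans (Nat.fib_add_two (n := n + 1)).symm
end

section
/- For every positive integer n, Q_1(n) equals the number of odd positive divisors of n; in particular Q_1(n)=τ(n) if n is odd and Q_1(n)=τ(n)−τ(n/2) if n is even, where τ(n) denotes the number of positive divisors of n. -/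
/-- The multinomial coefficient of a partition: if the part `i` occurs with
multiplicity `t_i`, it equals `(∑ t_i)! / ∏ (t_i)!`. -/
def partitionMultinomial {n : ℕ} (c : n.Partition) : ℕ :=
  Nat.multinomial c.parts.toFinset fun i => Multiset.count i c.parts

/-- `Q k n` is the number of partitions of `n` into odd parts whose
multinomial coefficient equals `k`. -/
def Q (k n : ℕ) : ℕ :=
  ((Nat.Partition.odds n).filter fun c => partitionMultinomial c = k).card

open Finset

namespace Nat

theorem one_lt_multinomial_of_ne {α : Type*} {s : Finset α} {f : α → ℕ} {a b : α}
    (ha : a ∈ s) (hb : b ∈ s) (hab : a ≠ b) (hfa : f a ≠ 0) (hfb : f b ≠ 0) :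
    1 < multinomial s f := by
  classical
  set k := ∑ i ∈ s.erase a, f i
  have hk : f b ≤ k := single_le_sum (fun i _ => Nat.zero_le _) (mem_erase.2 ⟨hab.symm, hb⟩)
  have hchoose : f a + 1 ≤ (f a + k).choose (f a) := by
    simpa using Nat.choose_le_choose (f a) (show f a + 1 ≤ f a + k by omega)
  rw [← insert_erase ha, multinomial_insert (notMem_erase a s)]
  calc 1 < (f a + k).choose (f a) := by omega
    _ ≤ (f a + k).choose (f a) * multinomial (s.erase a) f :=
      Nat.le_mul_of_pos_right _ (multinomial_pos _ _)

theorem card_divisors_filter_dvd {p n : ℕ} (hp : 0 < p) (hpn : p ∣ n) :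
    #(n.divisors.filter (p ∣ ·)) = #(n / p).divisors := by
  obtain ⟨m, rfl⟩ := hpn
  have hmap : (p * m).divisors.filter (p ∣ ·) =
      m.divisors.map ⟨(p * ·), mul_right_injective₀ hp.ne'⟩ := by
    ext d
    simp only [mem_filter, mem_divisors, mem_map, Function.Embedding.coeFn_mk]
    constructor
    · rintro ⟨⟨hdn, hn⟩, e, rfl⟩
      exact ⟨e, ⟨Nat.dvd_of_mul_dvd_mul_left hp hdn, right_ne_zero_of_mul hn⟩, rfl⟩
    · rintro ⟨e, ⟨hem, hm⟩, rfl⟩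
      exact ⟨⟨Nat.mul_dvd_mul_left p hem, mul_ne_zero hp.ne' hm⟩, dvd_mul_right p e⟩
  rw [hmap, card_map, Nat.mul_div_cancel_left m hp]

theorem card_divisors_filter_odd_add_card_divisors_div_two {n : ℕ} (hn : Even n) :
    #(n.divisors.filter Odd) + #(n / 2).divisors = #n.divisors := by
  have heven : n.divisors.filter (¬Odd ·) = n.divisors.filter (2 ∣ ·) :=
    filter_congr fun d _ => by rw [Nat.not_odd_iff_even, even_iff_two_dvd]
  rw [← card_divisors_filter_dvd two_pos (even_iff_two_dvd.1 hn), ← heven,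
    card_filter_add_card_filter_not]

theorem filter_odd_divisors_of_odd {n : ℕ} (hn : Odd n) : n.divisors.filter Odd = n.divisors :=
  filter_true_of_mem fun _ hd => hn.of_dvd_nat (dvd_of_mem_divisors hd)

end Nat

namespace Nat.Partition

def replicate {n d : ℕ} (hd : d ∣ n) (hd0 : 0 < d) : n.Partition where
  parts := Multiset.replicate (n / d) d
  parts_pos hi := by rwa [Multiset.eq_of_mem_replicate hi]
  parts_sum := by rw [Multiset.sum_replicate, smul_eq_mul, Nat.div_mul_cancel hd]

theorem replicate_injective {n d e : ℕ} (hn : n ≠ 0) (hd : d ∣ n) (hd0 : 0 < d) (he : e ∣ n)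
    (he0 : 0 < e) (h : replicate hd hd0 = replicate he he0) : d = e := by
  have hnd : n / d ≠ 0 := (Nat.div_pos (Nat.le_of_dvd (Nat.pos_of_ne_zero hn) hd) hd0).ne'
  have hmem : d ∈ (replicate he he0).parts := h ▸ Multiset.mem_replicate.2 ⟨hnd, rfl⟩
  exact Multiset.eq_of_mem_replicate hmem

theorem replicate_mem_odds {n d : ℕ} (hd : d ∣ n) (hd0 : 0 < d) (hodd : Odd d) :
    replicate hd hd0 ∈ odds n :=
  mem_filter.2 ⟨mem_univ _, fun _ hi => by
    rw [Multiset.eq_of_mem_replicate hi]; exact Nat.not_even_iff_odd.2 hodd⟩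

theorem partitionMultinomial_replicate {n d : ℕ} (hd : d ∣ n) (hd0 : 0 < d) :
    partitionMultinomial (replicate hd hd0) = 1 := by
  unfold partitionMultinomial replicate
  rw [Multiset.toFinset_replicate]
  split_ifs <;> simp

theorem eq_replicate_of_partitionMultinomial_eq_one {n a : ℕ} {c : n.Partition}
    (hc : partitionMultinomial c = 1) (ha : a ∈ c.parts) :
    ∃ (hd : a ∣ n) (ha0 : 0 < a), c = replicate hd ha0 := by
  have hall : ∀ b ∈ c.parts, b = a := fun b hb => by
    by_contra hba
    refine (Nat.one_lt_multinomial_of_ne (f := fun i => Multiset.count i c.parts)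
      (Multiset.mem_toFinset.2 ha) (Multiset.mem_toFinset.2 hb) (Ne.symm hba)
      (Multiset.count_ne_zero.2 ha) (Multiset.count_ne_zero.2 hb)).ne' hc
  have hrep : c.parts = Multiset.replicate (Multiset.card c.parts) a :=
    Multiset.eq_replicate_card.2 hall
  have hsum : Multiset.card c.parts * a = n := by
    have := c.parts_sum
    rwa [hrep, Multiset.sum_replicate, smul_eq_mul] at this
  refine ⟨Dvd.intro_left _ hsum, c.parts_pos ha, Nat.Partition.ext ?_⟩
  change c.parts = Multiset.replicate (n / a) a
  rwa [Nat.div_eq_of_eq_mul_left (c.parts_pos ha) hsum.symm]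

end Nat.Partition

open Nat.Partition in
theorem Q_one_eq_card_filter_odd_divisors {n : ℕ} (hn : n ≠ 0) :
    Q 1 n = #(n.divisors.filter Odd) := by
  refine (card_bij (fun d hd => replicate (Nat.dvd_of_mem_divisors (mem_filter.1 hd).1)
    (Nat.pos_of_mem_divisors (mem_filter.1 hd).1)) ?_ ?_ ?_).symm
  · intro d hd
    exact mem_filter.2 ⟨replicate_mem_odds _ _ (mem_filter.1 hd).2,
      partitionMultinomial_replicate _ _⟩
  · intro d _ e _ h
    exact replicate_injective hn _ _ _ _ h
  · intro c hc
    obtain ⟨hodds, hc1⟩ := mem_filter.1 hc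
    have hparts : c.parts ≠ 0 := fun h0 => hn (by rw [← c.parts_sum, h0, Multiset.sum_zero])
    obtain ⟨a, ha⟩ := Multiset.exists_mem_of_ne_zero hparts
    obtain ⟨hdvd, ha0, rfl⟩ := eq_replicate_of_partitionMultinomial_eq_one hc1 ha
    have hodd : Odd a := Nat.not_even_iff_odd.1 ((mem_filter.1 hodds).2 a ha)
    exact ⟨a, mem_filter.2 ⟨Nat.mem_divisors.2 ⟨hdvd, hn⟩, hodd⟩, rfl⟩

theorem Q_one_eq_card_odd_divisors (n : ℕ) (hn : 0 < n) :
    Q 1 n = (n.divisors.filter fun d => Odd d).card ∧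
    (Odd n → Q 1 n = n.divisors.card) ∧
    (Even n → Q 1 n = n.divisors.card - (n / 2).divisors.card) := by
  have hQ := Q_one_eq_card_filter_odd_divisors hn.ne'
  refine ⟨hQ, fun hodd => ?_, fun heven => ?_⟩
  · rw [hQ, Nat.filter_odd_divisors_of_odd hodd]
  · rw [hQ, ← Nat.card_divisors_filter_odd_add_card_divisors_div_two heven, Nat.add_sub_cancel]
end

section
/- For every positive integer n, Q_2(n) = 0 if n is odd, and Q_2(n) = ⌊n/4⌋ if n is even. -/
/-!
Peeling off one part at a time writes a multinomial coefficient as a binomial coefficient times a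
smaller multinomial coefficient, and a binomial coefficient equals `2` only as `C(2, 1)`. Hence the
multinomial coefficient of a partition is `2` exactly when it has two distinct parts, each
occurring once. So `Q 2 n` counts the ways to write `n = a + b` with `a < b` both odd: there are
none for odd `n`, and for even `n` the smaller part runs over the odd numbers below `n / 2`, of
which there are `⌊n / 4⌋`.
-/

open Finset

theorem Nat.choose_eq_two_iff {n k : ℕ} : n.choose k = 2 ↔ n = 2 ∧ k = 1 := by
  refine ⟨fun h => ?_, by rintro ⟨rfl, rfl⟩; rfl⟩
  obtain _ | m := n
  · cases k <;> simp at h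
  obtain _ | j := k
  · simp at h
  rw [Nat.choose_succ_succ'] at h
  rcases lt_trichotomy j m with hjm | rfl | hmj
  · have h₁ := Nat.choose_pos (n := m) (k := j) hjm.le
    have h₂ := Nat.choose_pos (n := m) (k := j + 1) hjm
    replace h₁ : m.choose j = 1 := by omega
    replace h₂ : m.choose (j + 1) = 1 := by omega
    rw [Nat.choose_eq_one_iff] at h₁ h₂
    omega
  · simp at h
  · simp [Nat.choose_eq_zero_of_lt hmj, Nat.choose_eq_zero_of_lt (hmj.trans (lt_add_one j))] at h

theorem Finset.exists_eq_singleton_of_sum_eq_one {ι : Type*} {s : Finset ι} {f : ι → ℕ}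
    (hf : ∀ i ∈ s, 0 < f i) (h : ∑ i ∈ s, f i = 1) : ∃ b, s = {b} ∧ f b = 1 := by
  have hcard : #s ≤ 1 := by simpa [h] using s.card_nsmul_le_sum f 1 hf
  have hne : s.Nonempty := Finset.nonempty_of_sum_ne_zero (h ▸ one_ne_zero)
  obtain ⟨b, rfl⟩ := Finset.card_eq_one.1 (le_antisymm hcard hne.card_pos)
  exact ⟨b, rfl, by simpa using h⟩

theorem Nat.exists_eq_pair_of_multinomial_eq_two {α : Type*} [DecidableEq α] {s : Finset α}
    {f : α → ℕ} (hf : ∀ i ∈ s, 0 < f i) (h : Nat.multinomial s f = 2) :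
    ∃ a b, a ≠ b ∧ s = {a, b} ∧ f a = 1 ∧ f b = 1 := by
  induction s using Finset.induction_on with
  | empty => simp at h
  | @insert a s ha ih =>
    have hfa : 0 < f a := hf a (mem_insert_self a s)
    have hfs : ∀ i ∈ s, 0 < f i := fun i hi => hf i (mem_insert_of_mem hi)
    rw [Nat.multinomial_insert ha] at h
    rcases Nat.prime_two.eq_one_or_self_of_dvd _ (Dvd.intro _ h) with hC | hC
    · rw [hC, one_mul] at h
      obtain ⟨x, y, hxy, rfl, hx, hy⟩ := ih hfs h
      rw [Nat.choose_eq_one_iff, sum_pair hxy] at hC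
      omega
    · obtain ⟨hsum, hfa1⟩ := Nat.choose_eq_two_iff.1 hC
      obtain ⟨b, rfl, hb⟩ := exists_eq_singleton_of_sum_eq_one hfs (by omega)
      exact ⟨a, b, by simpa using ha, rfl, hfa1, hb⟩

theorem Multiset.multinomial_count_eq_two_iff {α : Type*} [DecidableEq α] {m : Multiset α} :
    Nat.multinomial m.toFinset (fun i => m.count i) = 2 ↔ ∃ a b, a ≠ b ∧ m = {a, b} := by
  constructor
  · intro h
    obtain ⟨a, b, hab, hs, ha, hb⟩ :=
      Nat.exists_eq_pair_of_multinomial_eq_two (fun i hi => count_pos.2 (mem_toFinset.1 hi)) h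
    refine ⟨a, b, hab, ext.2 fun x => ?_⟩
    by_cases hx : x ∈ m.toFinset
    · rw [hs, Finset.mem_insert, Finset.mem_singleton] at hx
      rcases hx with rfl | rfl <;> simp [*, hab.symm]
    · rw [count_eq_zero_of_notMem (mt mem_toFinset.2 hx)]
      rw [hs] at hx
      simp_all
  · rintro ⟨a, b, hab, rfl⟩
    simp [hab]

theorem partitionMultinomial_eq_two_iff {n : ℕ} (c : n.Partition) :
    partitionMultinomial c = 2 ↔ ∃ a b, a ≠ b ∧ c.parts = {a, b} :=
  Multiset.multinomial_count_eq_two_iff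

theorem Nat.Partition.ofSums_pair_parts {n a b : ℕ} (h : ({a, b} : Multiset ℕ).sum = n)
    (ha : a ≠ 0) (hb : b ≠ 0) : (Nat.Partition.ofSums n {a, b} h).parts = {a, b} := by
  simp [ha, hb]

def smallerOddParts (n : ℕ) : Finset ℕ := {a ∈ range n | Odd a ∧ Odd (n - a) ∧ 2 * a < n}

theorem mem_smallerOddParts {n a : ℕ} :
    a ∈ smallerOddParts n ↔ Odd a ∧ Odd (n - a) ∧ 2 * a < n := by
  simp only [smallerOddParts, mem_filter, mem_range, and_iff_right_iff_imp]
  omega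

theorem ofSums_parts_of_mem_smallerOddParts {n a : ℕ} (ha : a ∈ smallerOddParts n)
    (h : ({a, n - a} : Multiset ℕ).sum = n) :
    (Nat.Partition.ofSums n {a, n - a} h).parts = {a, n - a} := by
  obtain ⟨hodd, hodd', -⟩ := mem_smallerOddParts.1 ha
  exact Nat.Partition.ofSums_pair_parts h hodd.pos.ne' hodd'.pos.ne'

theorem Nat.Partition.mem_odds_iff {n : ℕ} {c : n.Partition} :
    c ∈ Nat.Partition.odds n ↔ ∀ i ∈ c.parts, Odd i := by
  simp [Nat.Partition.odds, Nat.Partition.restricted]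

theorem Q_two_eq_card_smallerOddParts (n : ℕ) : Q 2 n = #(smallerOddParts n) := by
  symm
  refine card_bij (fun a ha => Nat.Partition.ofSums n {a, n - a} ?sum) ?maps ?inj ?surj
  case sum =>
    have := (mem_smallerOddParts.1 ha).2.2
    simp only [Multiset.insert_eq_cons, Multiset.sum_cons, Multiset.sum_singleton]
    omega
  case maps =>
    intro a ha
    rw [mem_filter, Nat.Partition.mem_odds_iff, partitionMultinomial_eq_two_iff,
      ofSums_parts_of_mem_smallerOddParts ha]
    obtain ⟨hodd, hodd', hlt⟩ := mem_smallerOddParts.1 ha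
    exact ⟨by simp [hodd, hodd'], a, n - a, by omega, rfl⟩
  case inj =>
    intro a ha b hb hab
    have hparts := congrArg Nat.Partition.parts hab
    rw [ofSums_parts_of_mem_smallerOddParts ha, ofSums_parts_of_mem_smallerOddParts hb] at hparts
    have hmem : a ∈ ({b, n - b} : Multiset ℕ) := hparts ▸ Multiset.mem_cons_self a _
    have := (mem_smallerOddParts.1 ha).2.2
    have := (mem_smallerOddParts.1 hb).2.2
    simp only [Multiset.insert_eq_cons, Multiset.mem_cons, Multiset.mem_singleton] at hmem
    omega
  case surj =>
    intro c hc
    rw [mem_filter, Nat.Partition.mem_odds_iff, partitionMultinomial_eq_two_iff] at hc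
    obtain ⟨hodd, a, b, hab, hparts⟩ := hc
    wlog hlt : a < b generalizing a b
    · exact this b a hab.symm (hparts.trans (Multiset.pair_comm a b)) (by omega)
    have hsum : a + b = n := by simpa [hparts] using c.parts_sum
    have hb : n - a = b := by omega
    have ha : a ∈ smallerOddParts n := mem_smallerOddParts.2
      ⟨hodd a (by simp [hparts]), hb ▸ hodd b (by simp [hparts]), by omega⟩
    refine ⟨a, ha, Nat.Partition.ext ?_⟩
    rw [ofSums_parts_of_mem_smallerOddParts ha, hparts, hb]

theorem smallerOddParts_eq_empty_of_odd {n : ℕ} (hn : Odd n) : smallerOddParts n = ∅ :=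
  eq_empty_of_forall_notMem fun a ha => by
    obtain ⟨hodd, hodd', -⟩ := mem_smallerOddParts.1 ha
    exact Nat.not_even_iff_odd.2 hodd' (Nat.Odd.sub_odd hn hodd)

theorem smallerOddParts_eq_image_of_even {n : ℕ} (hn : Even n) :
    smallerOddParts n = (range (n / 4)).image fun k => 2 * k + 1 := by
  obtain ⟨m, rfl⟩ := hn
  ext a
  simp only [mem_smallerOddParts, mem_image, mem_range]
  constructor
  · rintro ⟨⟨k, rfl⟩, -, hlt⟩
    exact ⟨k, by omega, rfl⟩
  · rintro ⟨k, hk, rfl⟩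
    exact ⟨odd_two_mul_add_one k, ⟨m - k - 1, by omega⟩, by omega⟩

theorem Q_two_eq_general (n : ℕ) :
    (Odd n → Q 2 n = 0) ∧ (Even n → Q 2 n = n / 4) := by
  rw [Q_two_eq_card_smallerOddParts]
  refine ⟨fun hn => ?_, fun hn => ?_⟩
  · rw [smallerOddParts_eq_empty_of_odd hn, card_empty]
  · rw [smallerOddParts_eq_image_of_even hn, card_image_of_injective _ fun k l h => by omega,
      card_range]

theorem Q_two_eq (n : ℕ) (hn : 0 < n) :
    (Odd n → Q 2 n = 0) ∧ (Even n → Q 2 n = n / 4) :=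
  Q_two_eq_general n
end

section
/- Let p be a prime and r a positive integer with p^r > 2. For every real x with |x| < 1, the series ∑_{n=1}^∞ Q_{p^r}(n) x^n converges to x^{p^r}/((1−x^2)(1−x^{2(p^r−1)})) − x^{p^r}/(1−x^{2 p^r}). -/
/-!
If a multinomial coefficient `(t₁ + ⋯ + t_k)! / (t₁! ⋯ t_k!)` with all `tᵢ > 0` equals a prime
power `p ^ t > 1`, then `k = 2` and the multiplicities are `1` and `p ^ t - 1`. Indeed each
binomial coefficient `C(N, tᵢ)`, `N = ∑ tᵢ`, divides it; by Kummer's theorem a prime power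
dividing `C(N, tᵢ)` is at most `N`, whereas `C(N, tᵢ) > N` unless `tᵢ ∈ {1, N - 1}`. Three or
more parts would then force every `tᵢ = 1`, i.e. `N! = p ^ t` with `N ≥ 3`, impossible.

Hence, for `p ^ r > 2`, `Q_{p^r}(n)` counts the pairs `a ≠ b` with
`(2a + 1) + (p ^ r - 1)(2b + 1) = n`. Over all pairs these sizes have generating function the
product of two geometric series, and the diagonal `a = b` contributes `x^{p^r} / (1 - x^{2p^r})`.
-/

open Finset

namespace Nat

theorem le_choose_of_pos_of_lt {m j : ℕ} (hj : 0 < j) (hjm : j < m) : m ≤ m.choose j := by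
  induction m generalizing j with
  | zero => omega
  | succ m ih =>
    obtain ⟨i, rfl⟩ : ∃ i, j = i + 1 := ⟨j - 1, by omega⟩
    rw [choose_succ_succ']
    rcases (show i + 1 ≤ m by omega).lt_or_eq with h | rfl
    · have := ih (by omega : 0 < i + 1) h
      have := choose_pos (show i ≤ m by omega)
      omega
    · rw [choose_succ_self_right, choose_self]

theorem lt_choose_of_two_le {n k : ℕ} (hk : 2 ≤ k) (hkn : k + 2 ≤ n) : n < n.choose k := by
  obtain ⟨j, rfl⟩ : ∃ j, k = j + 1 := ⟨k - 1, by omega⟩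
  obtain ⟨m, rfl⟩ : ∃ m, n = m + 1 := ⟨n - 1, by omega⟩
  rw [choose_succ_succ']
  have := le_choose_of_pos_of_lt (m := m) (j := j) (by omega) (by omega)
  have := le_choose_of_pos_of_lt (m := m) (j := j + 1) (by omega) (by omega)
  omega

theorem eq_one_or_eq_sub_one_of_choose_eq_prime_pow {p t n k : ℕ} (hp : p.Prime) (hk : 0 < k)
    (hkn : k < n) (h : n.choose k = p ^ t) : k = 1 ∨ k = n - 1 := by
  by_contra! hne
  have hle : p ^ t ≤ n := by
    simpa [h, hp.factorization_pow] using
      pow_factorization_choose_le (p := p) (k := k) (n := n) (by omega)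
  have := lt_choose_of_two_le (n := n) (k := k) (by omega) (by omega)
  omega

theorem choose_sum_dvd_multinomial {α : Type*} [DecidableEq α] {s : Finset α} {i : α}
    (f : α → ℕ) (hi : i ∈ s) : (∑ j ∈ s, f j).choose (f i) ∣ multinomial s f := by
  rw [← insert_erase hi, multinomial_insert (notMem_erase i s), sum_insert (notMem_erase i s)]
  exact dvd_mul_right _ _

theorem le_two_of_factorial_eq_prime_pow {p t n : ℕ} (hp : p.Prime) (h : n ! = p ^ t) : n ≤ 2 := by
  by_contra! hn
  have hdvd (q : ℕ) (hq : q.Prime) (hqn : q ≤ n) : q = p :=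
    (prime_dvd_prime_iff_eq hq hp).mp <|
      hq.dvd_of_dvd_pow (h ▸ dvd_factorial hq.pos hqn)
  have := (hdvd 2 prime_two (by omega)).trans (hdvd 3 prime_three hn).symm
  omega

theorem multinomial_eq_prime_pow {α : Type*} [DecidableEq α] {p t : ℕ} {s : Finset α}
    {f : α → ℕ} (hp : p.Prime) (ht : 0 < t) (hf : ∀ i ∈ s, 0 < f i)
    (h : multinomial s f = p ^ t) : ∃ a b, a ≠ b ∧ s = {a, b} ∧ f a = 1 ∧ f b = p ^ t - 1 := by
  have hpt : 1 < p ^ t := one_lt_pow ht.ne' hp.one_lt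
  rcases lt_trichotomy #s 2 with hs | hs | hs
  · exfalso
    obtain hs | hs : #s = 0 ∨ #s = 1 := by omega
    · rw [Finset.card_eq_zero.mp hs, multinomial_empty] at h
      omega
    · obtain ⟨a, rfl⟩ := Finset.card_eq_one.mp hs
      rw [multinomial_singleton] at h
      omega
  · obtain ⟨a, b, hab, rfl⟩ := card_eq_two.mp hs
    rw [binomial_eq_choose hab] at h
    have ha := hf a (by simp)
    have hb := hf b (by simp)
    rcases eq_one_or_eq_sub_one_of_choose_eq_prime_pow hp ha (by omega) h with h1 | h1
    · refine ⟨a, b, hab, rfl, h1, ?_⟩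
      rw [h1, choose_one_right] at h
      omega
    · have hb1 : f b = 1 := by omega
      refine ⟨b, a, hab.symm, pair_comm a b, hb1, ?_⟩
      rw [hb1, choose_succ_self_right] at h
      omega
  · -- with three or more parts every multiplicity is `1`, so `#s ! = p ^ t`
    have hone (i : α) (hi : i ∈ s) : f i = 1 := by
      have hrest : 2 ≤ ∑ j ∈ s.erase i, f j :=
        calc 2 ≤ #(s.erase i) • 1 := by rw [card_erase_of_mem hi, smul_eq_mul]; omega
          _ ≤ _ := card_nsmul_le_sum _ _ _ fun j hj => hf j (mem_of_mem_erase hj)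
      have hsum := add_sum_erase s f hi
      obtain ⟨u, -, hu⟩ := (dvd_prime_pow hp).mp (h ▸ choose_sum_dvd_multinomial f hi)
      rcases eq_one_or_eq_sub_one_of_choose_eq_prime_pow hp (hf i hi) (by omega) hu with h1 | h1
      <;> omega
    rw [multinomial_congr hone] at h
    simp only [multinomial, sum_const, smul_eq_mul, mul_one, factorial_one, prod_const_one,
      Nat.div_one] at h
    have := le_two_of_factorial_eq_prime_pow hp h
    omega

end Nat

namespace Multiset

variable {α : Type*} [DecidableEq α]

theorem multinomial_count_cons_replicate {u v : α} (huv : u ≠ v) (j : ℕ) :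
    Nat.multinomial (u ::ₘ replicate j v).toFinset (count · (u ::ₘ replicate j v)) = j + 1 := by
  rcases j.eq_zero_or_pos with rfl | hj
  · simp
  rw [toFinset_cons, toFinset_replicate, if_neg hj.ne', Nat.binomial_eq_choose huv]
  simp [count_replicate, Ne.symm huv, add_comm]

theorem exists_eq_cons_replicate_of_multinomial_count_eq_prime_pow {p t : ℕ} {m : Multiset α}
    (hp : p.Prime) (ht : 0 < t) (h : Nat.multinomial m.toFinset (count · m) = p ^ t) :
    ∃ u v, u ≠ v ∧ m = u ::ₘ replicate (p ^ t - 1) v := by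
  obtain ⟨u, v, huv, hs, hu, hv⟩ :=
    Nat.multinomial_eq_prime_pow hp ht (fun i hi => count_pos.mpr (mem_toFinset.mp hi)) h
  refine ⟨u, v, huv, ext.mpr fun z => ?_⟩
  rw [count_cons, count_replicate]
  by_cases hzu : z = u
  · subst hzu
    simp [hu, Ne.symm huv]
  by_cases hzv : z = v
  · subst hzv
    simp [hv, hzu]
  have : z ∉ m.toFinset := by simp [hs, hzu, hzv]
  simp [mem_toFinset.not.mp this, hzu, Ne.symm hzv]

theorem cons_replicate_inj {u v u' v' : α} {j : ℕ} (hj : 2 ≤ j)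
    (h : u ::ₘ replicate j v = u' ::ₘ replicate j v') : u = u' ∧ v = v' := by
  have hv : v = v' := by
    by_contra hne
    have := congrArg (count v) h
    simp only [count_cons, count_replicate, if_neg (Ne.symm hne)] at this
    split_ifs at this <;> omega
  subst hv
  exact ⟨(cons_inj_left _).mp h, rfl⟩

end Multiset

def oddPairParts (j : ℕ) (ab : ℕ × ℕ) : Multiset ℕ :=
  (2 * ab.1 + 1) ::ₘ Multiset.replicate j (2 * ab.2 + 1)

def oddPairSize (j : ℕ) (ab : ℕ × ℕ) : ℕ := 2 * ab.1 + 1 + j * (2 * ab.2 + 1)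

theorem sum_oddPairParts (j : ℕ) (ab : ℕ × ℕ) : (oddPairParts j ab).sum = oddPairSize j ab := by
  simp [oddPairParts, oddPairSize]

def oddPairPartition {n : ℕ} (j : ℕ) (ab : ℕ × ℕ) (h : oddPairSize j ab = n) : n.Partition where
  parts := oddPairParts j ab
  parts_pos := by
    intro i hi
    simp only [oddPairParts, Multiset.mem_cons, Multiset.mem_replicate] at hi
    omega
  parts_sum := (sum_oddPairParts j ab).trans h

theorem oddPairPartition_mem_odds {n j : ℕ} {ab : ℕ × ℕ} (h : oddPairSize j ab = n) :
    oddPairPartition j ab h ∈ Nat.Partition.odds n := by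
  simp only [Nat.Partition.odds, Nat.Partition.restricted, Finset.mem_filter, Finset.mem_univ,
    true_and, oddPairPartition, oddPairParts, Multiset.mem_cons, Multiset.mem_replicate]
  rintro i (rfl | ⟨-, rfl⟩) <;> simp

theorem partitionMultinomial_oddPairPartition {n j : ℕ} {ab : ℕ × ℕ} (hab : ab.1 ≠ ab.2)
    (h : oddPairSize j ab = n) : partitionMultinomial (oddPairPartition j ab h) = j + 1 :=
  Multiset.multinomial_count_cons_replicate (by omega) j

theorem natCard_oddPairSize_preimage {p r j : ℕ} (hp : p.Prime) (hj : 2 ≤ j)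
    (hpj : p ^ r = j + 1) (n : ℕ) :
    Nat.card ((fun ab : ↥(Set.diagonal ℕ)ᶜ => oddPairSize j ab) ⁻¹' {n}) = Q (j + 1) n := by
  have hr : 0 < r := Nat.pos_of_ne_zero fun h => by simp [h] at hpj; omega
  rw [Q, ← Nat.card_eq_finsetCard]
  refine Nat.card_eq_of_bijective
    (fun ab => ⟨oddPairPartition j ab.1.1 ab.2, Finset.mem_filter.mpr
      ⟨oddPairPartition_mem_odds ab.2, ?_⟩⟩) ⟨?_, ?_⟩
  · exact (partitionMultinomial_oddPairPartition ab.1.2 ab.2).trans (by omega)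
  · rintro ⟨⟨ab, hab⟩, h⟩ ⟨⟨ab', hab'⟩, h'⟩ heq
    have := Multiset.cons_replicate_inj (by omega) (congrArg (·.1.parts) heq)
    exact Subtype.ext <| Subtype.ext <| Prod.ext (by omega) (by omega)
  · rintro ⟨c, hc⟩
    obtain ⟨hmem, hmul⟩ := Finset.mem_filter.mp hc
    obtain ⟨u, v, huv, hparts⟩ :=
      Multiset.exists_eq_cons_replicate_of_multinomial_count_eq_prime_pow (m := c.parts) hp hr
        (hmul.trans hpj.symm)
    rw [hpj, Nat.add_sub_cancel] at hparts
    have hodd : ∀ i ∈ c.parts, Odd i := by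
      simpa [Nat.Partition.odds, Nat.Partition.restricted] using hmem
    obtain ⟨a, rfl⟩ := hodd u (by simp [hparts])
    obtain ⟨b, rfl⟩ := hodd v <|
      hparts ▸ Multiset.mem_cons_of_mem (Multiset.mem_replicate.mpr ⟨by omega, rfl⟩)
    have hsize : oddPairSize j (a, b) = n := by
      rw [← sum_oddPairParts, ← c.parts_sum, hparts, oddPairParts]
    exact ⟨⟨⟨(a, b), by simpa using huv⟩, hsize⟩, Subtype.ext (Nat.Partition.ext hparts.symm)⟩

theorem HasSum.natCard_preimage_nsmul {α β γ : Type*} [AddCommGroup α] [UniformSpace α]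
    [IsUniformAddGroup α] [CompleteSpace α] [T2Space α] {g : β → γ} {f : γ → α} {a : α}
    (h : HasSum (f ∘ g) a) : HasSum (fun c => Nat.card (g ⁻¹' {c}) • f c) a := by
  convert h.tsum_fiberwise g using 2 with c
  rw [← tsum_const]
  exact tsum_congr fun b => congrArg f b.2.symm

theorem hasSum_geometric_mul_geometric {u v : ℝ} (hu : |u| < 1) (hv : |v| < 1) :
    HasSum (fun ab : ℕ × ℕ => u ^ ab.1 * v ^ ab.2) ((1 - u)⁻¹ * (1 - v)⁻¹) :=
  (hasSum_geometric_of_abs_lt_one hu).mul (hasSum_geometric_of_abs_lt_one hv) <|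
    summable_mul_of_summable_norm (by simpa using summable_geometric_of_abs_lt_one hu)
      (by simpa using summable_geometric_of_abs_lt_one hv)

theorem abs_pow_lt_one {R : Type*} [Ring R] [LinearOrder R] [IsStrictOrderedRing R] {x : R}
    (hx : |x| < 1) {m : ℕ} (hm : m ≠ 0) : |x ^ m| < 1 := by
  rw [abs_pow]
  exact pow_lt_one₀ (abs_nonneg x) hx hm

theorem hasSum_pow_oddPairSize {x : ℝ} (hx : |x| < 1) {j : ℕ} (hj : j ≠ 0) :
    HasSum (fun ab : ℕ × ℕ => x ^ oddPairSize j ab)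
      (x ^ (j + 1) / ((1 - x ^ 2) * (1 - x ^ (2 * j)))) := by
  have hsplit (ab : ℕ × ℕ) :
      x ^ oddPairSize j ab = x ^ (j + 1) * ((x ^ 2) ^ ab.1 * (x ^ (2 * j)) ^ ab.2) := by
    simp only [oddPairSize]
    ring
  simp only [hsplit, div_eq_mul_inv, mul_inv]
  exact (hasSum_geometric_mul_geometric (abs_pow_lt_one hx two_ne_zero)
    (abs_pow_lt_one hx (mul_ne_zero two_ne_zero hj))).mul_left _

theorem hasSum_pow_oddPairSize_diagonal {x : ℝ} (hx : |x| < 1) (j : ℕ) :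
    HasSum (fun ab : ↥(Set.diagonal ℕ) => x ^ oddPairSize j ab)
      (x ^ (j + 1) / (1 - x ^ (2 * (j + 1)))) := by
  rw [← Set.range_diag]
  refine (Function.diag_injective.hasSum_range_iff (f := fun ab => x ^ oddPairSize j ab)).mpr ?_
  have hsplit (b : ℕ) : x ^ oddPairSize j (b, b) = x ^ (j + 1) * (x ^ (2 * (j + 1))) ^ b := by
    simp only [oddPairSize]
    ring
  simp only [Function.comp_def, Function.diag, hsplit, div_eq_mul_inv]
  exact (hasSum_geometric_of_abs_lt_one (abs_pow_lt_one hx (by omega))).mul_left _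

theorem hasSum_pow_oddPairSize_compl_diagonal {x : ℝ} (hx : |x| < 1) {j : ℕ} (hj : j ≠ 0) :
    HasSum (fun ab : ↥(Set.diagonal ℕ)ᶜ => x ^ oddPairSize j ab)
      (x ^ (j + 1) / ((1 - x ^ 2) * (1 - x ^ (2 * j))) - x ^ (j + 1) / (1 - x ^ (2 * (j + 1)))) :=
  (HasSum.hasSum_compl_iff (f := fun ab => x ^ oddPairSize j ab)
    (hasSum_pow_oddPairSize_diagonal hx j)).mpr <| by
      rw [add_sub_cancel]
      exact hasSum_pow_oddPairSize hx hj

theorem Q_prime_pow_genFun_general (p r : ℕ) (hp : p.Prime) (hpr : 2 < p ^ r)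
    (x : ℝ) (hx : |x| < 1) :
    HasSum (fun n : ℕ => (Q (p ^ r) (n + 1) : ℝ) * x ^ (n + 1))
      (x ^ (p ^ r) / ((1 - x ^ 2) * (1 - x ^ (2 * (p ^ r - 1)))) -
        x ^ (p ^ r) / (1 - x ^ (2 * p ^ r))) := by
  obtain ⟨j, hj⟩ : ∃ j, p ^ r = j + 1 := ⟨p ^ r - 1, by omega⟩
  let size : ↥(Set.diagonal ℕ)ᶜ → ℕ := fun ab => oddPairSize j ab
  have hgen := HasSum.natCard_preimage_nsmul (f := fun n => x ^ n) (g := size)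
    (hasSum_pow_oddPairSize_compl_diagonal hx (j := j) (by omega))
  have hzero : size ⁻¹' {0} = ∅ :=
    Set.eq_empty_of_forall_notMem fun ab h => by simp [size, oddPairSize] at h
  rw [← hasSum_nat_add_iff' 1] at hgen
  simp only [Finset.sum_range_one, hzero, Nat.card_of_isEmpty, zero_smul, sub_zero] at hgen
  simp only [size, natCard_oddPairSize_preimage hp (by omega) hj, nsmul_eq_mul] at hgen
  rwa [hj, Nat.add_sub_cancel]

theorem Q_prime_pow_genFun (p r : ℕ) (hp : p.Prime) (hr : 0 < r) (hpr : 2 < p ^ r)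
    (x : ℝ) (hx : |x| < 1) :
    HasSum (fun n : ℕ => (Q (p ^ r) (n + 1) : ℝ) * x ^ (n + 1))
      (x ^ (p ^ r) / ((1 - x ^ 2) * (1 - x ^ (2 * (p ^ r - 1)))) -
        x ^ (p ^ r) / (1 - x ^ (2 * p ^ r))) :=
  Q_prime_pow_genFun_general p r hp hpr x hx
end

section
/- For all positive integers n and k, q(n) ≤ (1/k)·( F_n + ∑_{j=1}^{k−1} (k−j) Q_j(n) ). -/
/-!
The sum of the multinomial coefficients of the odd partitions of `n` counts the compositions of
`n` into odd parts. Sorting compositions by their first part gives `g n = ∑_{a odd} g (n - a)`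
with `g 0 = 1`, hence `g n = g (n - 1) + g (n - 2)` for `n ≥ 3` and `g n = F_n` for `n ≥ 1`.
On the other hand every multinomial coefficient `m ≥ 1` satisfies
`k ≤ m + ∑_{j=1}^{k-1} (k - j) [m = j]`; summing this over the odd partitions of `n` gives
`k q(n) ≤ F_n + ∑_{j=1}^{k-1} (k - j) Q_j(n)`.
-/

open Finset Nat

namespace Multiset

variable {α : Type*} [DecidableEq α]

theorem prod_factorial_count_mul_countPerms {m : Multiset α} {s : Finset α}
    (hs : m.toFinset ⊆ s) : (∏ a ∈ s, (m.count a)!) * m.countPerms = (card m)! := by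
  rw [← prod_subset hs fun a _ ha ↦ by rw [count_eq_zero_of_notMem (by simpa using ha),
    factorial_zero], ← toFinset_sum_count_eq]
  exact multinomial_spec _ _

theorem prod_factorial_count_eq_count_mul {m : Multiset α} {a : α} (ha : a ∈ m) :
    ∏ i ∈ m.toFinset, (m.count i)! =
      m.count a * ∏ i ∈ m.toFinset, ((m.erase a).count i)! := by
  have ha' : a ∈ m.toFinset := mem_toFinset.2 ha
  rw [← mul_prod_erase _ _ ha', ← mul_prod_erase _ _ ha', count_erase_self, ← mul_assoc,
    mul_factorial_pred (count_pos.2 ha).ne']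
  congr 1
  exact prod_congr rfl fun i hi ↦ by rw [count_erase_of_ne (ne_of_mem_erase hi)]

theorem countPerms_eq_sum_countPerms_erase {m : Multiset α} (hm : m ≠ 0) :
    m.countPerms = ∑ a ∈ m.toFinset, (m.erase a).countPerms := by
  refine Nat.eq_of_mul_eq_mul_left (by positivity : 0 < ∏ a ∈ m.toFinset, (m.count a)!) ?_
  rw [prod_factorial_count_mul_countPerms subset_rfl, mul_sum]
  calc (card m)! = ∑ a ∈ m.toFinset, m.count a * (card m - 1)! := by
        rw [← sum_mul, toFinset_sum_count_eq, mul_factorial_pred (card_pos.2 hm).ne']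
    _ = _ := sum_congr rfl fun a ha ↦ by
        have ha := mem_toFinset.1 ha
        rw [prod_factorial_count_eq_count_mul ha, mul_assoc, prod_factorial_count_mul_countPerms
          fun i hi ↦ mem_toFinset.2 (mem_of_mem_erase (mem_toFinset.1 hi)), card_erase_of_mem ha,
          pred_eq_sub_one]

end Multiset

theorem sum_filter_odd_Icc_add_two {M : Type*} [AddCommMonoid M] (f : ℕ → M) (n : ℕ) :
    ∑ a ∈ (Icc 1 (n + 2)).filter (¬Even ·), f (n + 2 - a) =
      f (n + 1) + ∑ a ∈ (Icc 1 n).filter (¬Even ·), f (n - a) := by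
  have h1 : 1 ∈ (Icc 1 (n + 2)).filter (¬Even ·) := by simp
  rw [← add_sum_erase _ _ h1]
  congr 1
  refine sum_nbij' (· - 2) (· + 2) ?_ ?_ ?_ ?_ ?_ <;> intro a ha <;>
    simp only [mem_erase, mem_filter, mem_Icc, Nat.not_even_iff] at ha ⊢ <;>
    first | omega | congr 1; omega

theorem eq_fib_of_eq_sum_filter_odd {f : ℕ → ℕ} (h0 : f 0 = 1)
    (hf : ∀ n, 0 < n → f n = ∑ a ∈ (Icc 1 n).filter (¬Even ·), f (n - a)) :
    ∀ {n : ℕ}, 0 < n → f n = fib n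
  | 1, _ => by simp [hf 1 one_pos, h0, filter_singleton]
  | 2, _ => by
    rw [hf 2 two_pos, sum_filter_odd_Icc_add_two f 0]
    simp [eq_fib_of_eq_sum_filter_odd h0 hf]
  | n + 3, _ => by
    rw [hf (n + 3) (by omega), sum_filter_odd_Icc_add_two f (n + 1), ← hf (n + 1) (by omega),
      eq_fib_of_eq_sum_filter_odd h0 hf (by omega), eq_fib_of_eq_sum_filter_odd h0 hf (by omega),
      add_comm]
    exact (fib_add_two (n := n + 1)).symm

namespace Nat.Partition

variable {p : ℕ → Prop} [DecidablePred p]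

theorem mem_restricted {n : ℕ} {c : n.Partition} :
    c ∈ restricted n p ↔ ∀ i ∈ c.parts, p i := by
  simp [restricted]

theorem parts_ne_zero_s10 {n : ℕ} (hn : 0 < n) (c : n.Partition) : c.parts ≠ 0 := by
  intro h
  have := c.parts_sum
  simp only [h, Multiset.sum_zero] at this
  omega

theorem sum_restricted_filter_mem_parts_erase {β : Type*} [AddCommMonoid β] {n a : ℕ}
    (ha1 : 1 ≤ a) (ha : a ≤ n) (hpa : p a) (f : Multiset ℕ → β) :
    ∑ c ∈ (restricted n p).filter (a ∈ ·.parts), f (c.parts.erase a) =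
      ∑ c ∈ restricted (n - a) p, f c.parts := by
  let e := partitionWithPartEquiv ha1 ha
  refine sum_bij' (fun c hc ↦ e ⟨c, (mem_filter.1 hc).2⟩) (fun c _ ↦ (e.symm c).1)
    (fun c hc ↦ ?_) (fun c hc ↦ ?_) (fun c _ ↦ by simp [e]) (fun c _ ↦ by simp [e])
    (fun c _ ↦ by simp [e])
  · rw [mem_filter, mem_restricted] at hc
    simp only [mem_restricted, e, partitionWithPartEquiv_apply_parts]
    exact fun i hi ↦ hc.1 i (Multiset.mem_of_mem_erase hi)
  · rw [mem_restricted] at hc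
    simpa [mem_restricted, e, hpa] using hc

theorem sum_countPerms_restricted {n : ℕ} (hn : 0 < n) :
    ∑ c ∈ restricted n p, c.parts.countPerms =
      ∑ a ∈ (Icc 1 n).filter p, ∑ c ∈ restricted (n - a) p, c.parts.countPerms := by
  calc ∑ c ∈ restricted n p, c.parts.countPerms
      = ∑ c ∈ restricted n p, ∑ a ∈ c.parts.toFinset, (c.parts.erase a).countPerms :=
        sum_congr rfl fun c _ ↦ Multiset.countPerms_eq_sum_countPerms_erase (parts_ne_zero_s10 hn c)
    _ = ∑ a ∈ (Icc 1 n).filter p,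
          ∑ c ∈ (restricted n p).filter (a ∈ ·.parts), (c.parts.erase a).countPerms := by
        refine sum_comm' fun c a ↦ ?_
        simp only [mem_filter, mem_restricted, mem_Icc, Multiset.mem_toFinset]
        exact ⟨fun ⟨hc, ha⟩ ↦
            ⟨⟨hc, ha⟩, ⟨c.parts_pos ha, le_of_mem_parts ha⟩, hc a ha⟩,
          fun ⟨⟨hc, ha⟩, _⟩ ↦ ⟨hc, ha⟩⟩
    _ = _ := sum_congr rfl fun a ha ↦ by
        obtain ⟨⟨ha1, han⟩, hpa⟩ := by simpa only [mem_filter, mem_Icc] using ha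
        exact sum_restricted_filter_mem_parts_erase ha1 han hpa _

theorem sum_countPerms_odds_zero : ∑ c ∈ odds 0, c.parts.countPerms = 1 := by
  simp [odds, restricted, partition_zero_parts]

theorem sum_countPerms_odds_eq_fib {n : ℕ} (hn : 0 < n) :
    ∑ c ∈ odds n, c.parts.countPerms = fib n :=
  eq_fib_of_eq_sum_filter_odd sum_countPerms_odds_zero (fun _ ↦ sum_countPerms_restricted) hn

end Nat.Partition

theorem sum_partitionMultinomial_odds {n : ℕ} (hn : 0 < n) :
    ∑ c ∈ Partition.odds n, partitionMultinomial c = fib n :=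
  Partition.sum_countPerms_odds_eq_fib hn

theorem natCast_le_add_sum_ite_eq {R : Type*} [Ring R] [LinearOrder R] [IsStrictOrderedRing R]
    {k m : ℕ} (hm : 1 ≤ m) :
    (k : R) ≤ m + ∑ j ∈ Icc 1 (k - 1), if m = j then (k : R) - j else 0 := by
  rw [sum_ite_eq]
  split_ifs with h
  · simp
  · have : k ≤ m := by rw [mem_Icc] at h; omega
    simpa using (Nat.cast_le (α := R)).2 this

theorem natCast_mul_q_le_fib_add_sum_Q {n : ℕ} (hn : 0 < n) (k : ℕ) :
    (k : ℝ) * q n ≤ fib n + ∑ j ∈ Icc 1 (k - 1), ((k : ℝ) - j) * Q j n :=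
  calc (k : ℝ) * q n = ∑ _c ∈ Partition.odds n, (k : ℝ) := by simp [q, mul_comm]
    _ ≤ ∑ c ∈ Partition.odds n, ((partitionMultinomial c : ℝ) +
          ∑ j ∈ Icc 1 (k - 1), if partitionMultinomial c = j then (k : ℝ) - j else 0) :=
      sum_le_sum fun c _ ↦ natCast_le_add_sum_ite_eq (multinomial_pos _ _)
    _ = fib n + ∑ j ∈ Icc 1 (k - 1), ((k : ℝ) - j) * Q j n := by
      rw [sum_add_distrib, ← Nat.cast_sum, sum_partitionMultinomial_odds hn, sum_comm]
      simp only [Q, natCast_card_filter, mul_sum, mul_boole]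

theorem q_le_fib_add_sum_Q (n k : ℕ) (hn : 0 < n) (hk : 0 < k) :
    (q n : ℝ) ≤ (1 / (k : ℝ)) *
      ((Nat.fib n : ℝ) + ∑ j ∈ Finset.Icc 1 (k - 1), ((k : ℝ) - (j : ℝ)) * (Q j n : ℝ)) := by
  rw [one_div_mul_eq_div, le_div_iff₀ (by exact_mod_cast hk), mul_comm]
  exact natCast_mul_q_le_fib_add_sum_Q hn k
end

section
/- For every real x with 0 < x < 1, 1 + ∑_{n=1}^∞ x^n/(1−x^{2n}) < ∏_{n=1}^∞ (1+x^n). -/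
/-!
Put `y_k = x ^ (2k+1)`. Expanding `x^n / (1 - x^{2n}) = ∑_k x^{n(2k+1)}` and summing over `n`
first turns the left side into `1 + ∑_k y_k / (1 - y_k)`. Euler's identity
`∏ (1 + x^n) = ∏_k (1 - y_k)⁻¹` turns the right side into `∏_k (1 + y_k / (1 - y_k))`, and a
product of factors `1 + a_k` with all `a_k > 0` exceeds `1 + ∑ a_k` by at least `a_0 a_1`.
-/

open Function

theorem Finset.one_add_sum_le_prod_one_add {ι : Type*} {f : ι → ℝ} (s : Finset ι)
    (hf : ∀ i ∈ s, 0 ≤ f i) : 1 + ∑ i ∈ s, f i ≤ ∏ i ∈ s, (1 + f i) := by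
  classical
  induction s using Finset.induction_on with
  | empty => simp
  | insert i s hi ih =>
    rw [sum_insert hi, prod_insert hi]
    have hfi := hf i (mem_insert_self i s)
    have hsum := sum_nonneg fun j hj => hf j (mem_insert_of_mem hj)
    have := ih fun j hj => hf j (mem_insert_of_mem hj)
    nlinarith

theorem one_add_tsum_le_tprod_one_add {ι : Type*} {f : ι → ℝ} (hf : ∀ i, 0 ≤ f i)
    (hs : Summable f) : 1 + ∑' i, f i ≤ ∏' i, (1 + f i) := by
  have hsum := (tendsto_const_nhds (x := (1 : ℝ))).add hs.hasSum
  have hprod := (Real.multipliable_one_add_of_summable hs).hasProd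
  exact le_of_tendsto_of_tendsto' hsum hprod fun s => s.one_add_sum_le_prod_one_add fun i _ => hf i

theorem one_add_tsum_lt_tprod_one_add {f : ℕ → ℝ} (hf : ∀ n, 0 ≤ f n) (hs : Summable f)
    (h0 : 0 < f 0) (h1 : 0 < f 1) : 1 + ∑' n, f n < ∏' n, (1 + f n) := by
  have hs' : Summable fun n => f (n + 1) := (summable_nat_add_iff 1).2 hs
  have hsum : ∑' n, f n = f 0 + ∑' n, f (n + 1) := hs.tsum_eq_zero_add
  have hprod : ∏' n, (1 + f n) = (1 + f 0) * ∏' n, (1 + f (n + 1)) :=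
    tprod_eq_zero_mul' (Real.multipliable_one_add_of_summable hs')
  have htail : 0 < ∑' n, f (n + 1) := hs'.tsum_pos (fun _ => hf _) 0 h1
  have := one_add_tsum_le_tprod_one_add (fun n => hf (n + 1)) hs'
  rw [hsum, hprod]
  nlinarith

section Euler

variable {𝕜 : Type*} [NormedField 𝕜] {x : 𝕜} {g : ℕ → ℕ}

theorem summable_norm_pow_comp (hx : ‖x‖ < 1) (hg : Injective g) :
    Summable fun n => ‖x ^ g n‖ := by
  simp only [norm_pow]
  exact (summable_geometric_of_lt_one (norm_nonneg x) hx).comp_injective hg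

variable [CompleteSpace 𝕜]

theorem multipliable_one_add_pow_comp (hx : ‖x‖ < 1) (hg : Injective g) :
    Multipliable fun n => 1 + x ^ g n :=
  multipliable_one_add_of_summable (summable_norm_pow_comp hx hg)

theorem multipliable_one_sub_pow_comp (hx : ‖x‖ < 1) (hg : Injective g) :
    Multipliable fun n => 1 - x ^ g n := by
  simpa only [sub_eq_add_neg] using multipliable_one_add_of_summable (f := fun n => -x ^ g n)
    (by simpa only [norm_neg] using summable_norm_pow_comp hx hg)

theorem tprod_one_sub_pow_comp_ne_zero (hx : ‖x‖ < 1) (hg : Injective g) (hg0 : ∀ n, g n ≠ 0) :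
    ∏' n, (1 - x ^ g n) ≠ 0 := by
  simp only [sub_eq_add_neg]
  refine tprod_one_add_ne_zero_of_summable (fun n => ?_)
    (by simpa only [norm_neg] using summable_norm_pow_comp hx hg)
  rw [← sub_eq_add_neg, sub_ne_zero]
  intro h
  have := congrArg norm h
  rw [norm_one, norm_pow] at this
  exact (pow_lt_one₀ (norm_nonneg x) hx (hg0 n)).ne' this

theorem tprod_one_add_pow_succ_eq_tprod_inv_one_sub_pow_odd (hx : ‖x‖ < 1) :
    ∏' n : ℕ, (1 + x ^ (n + 1)) = ∏' k : ℕ, (1 - x ^ (2 * k + 1))⁻¹ := by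
  have hsucc : Injective fun n : ℕ => n + 1 := add_left_injective 1
  have hodd : Injective fun k : ℕ => 2 * k + 1 := fun a b h => by simp only at h; omega
  have heven : Injective fun k : ℕ => 2 * k + 2 := fun a b h => by simp only at h; omega
  have hodd_mult := multipliable_one_sub_pow_comp hx hodd
  have heven_ne := tprod_one_sub_pow_comp_ne_zero hx heven fun k => by omega
  have hsquares : (∏' n, (1 + x ^ (n + 1))) * ∏' n, (1 - x ^ (n + 1))
      = ∏' k, (1 - x ^ (2 * k + 2)) := by
    rw [← (multipliable_one_add_pow_comp hx hsucc).tprod_mul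
      (multipliable_one_sub_pow_comp hx hsucc)]
    exact tprod_congr fun n => by ring
  -- the even-exponent factors of `∏ (1 - x ^ n)` cancel against the right-hand side
  have hsplit := tprod_even_mul_odd (f := fun n => 1 - x ^ (n + 1)) hodd_mult
    (multipliable_one_sub_pow_comp hx heven)
  rw [← hsplit, ← mul_assoc] at hsquares
  rw [hodd_mult.tprod_inv₀ (tprod_one_sub_pow_comp_ne_zero hx hodd fun k => by omega)]
  exact eq_inv_of_mul_eq_one_left (mul_right_cancel₀ heven_ne (hsquares.trans (one_mul _).symm))

end Euler

section Lambert

variable {x : ℝ}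

theorem tsum_pow_succ_of_lt_one (h0 : 0 ≤ x) (h1 : x < 1) :
    ∑' n : ℕ, x ^ (n + 1) = x / (1 - x) := by
  simp only [pow_succ', tsum_mul_left, tsum_geometric_of_lt_one h0 h1, div_eq_mul_inv]

theorem tsum_pow_odd_of_lt_one (h0 : 0 ≤ x) (h1 : x < 1) :
    ∑' k : ℕ, x ^ (2 * k + 1) = x / (1 - x ^ 2) := by
  have hgeom (k : ℕ) : x ^ (2 * k + 1) = x * (x ^ 2) ^ k := by rw [pow_succ', pow_mul]
  rw [tsum_congr hgeom, tsum_mul_left,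
    tsum_geometric_of_lt_one (sq_nonneg x) (pow_lt_one₀ h0 h1 two_ne_zero), div_eq_mul_inv]

theorem summable_pow_odd_div_one_sub (h0 : 0 ≤ x) (h1 : x < 1) :
    Summable fun k : ℕ => x ^ (2 * k + 1) / (1 - x ^ (2 * k + 1)) := by
  refine ((summable_geometric_of_lt_one h0 h1).div_const (1 - x)).of_nonneg_of_le
    (fun k => div_nonneg (pow_nonneg h0 _) (sub_nonneg.2 (pow_le_one₀ h0 h1.le)))
    fun k => div_le_div₀ (pow_nonneg h0 _) (pow_le_pow_of_le_one h0 h1.le (by omega))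
      (sub_pos.2 h1) (sub_le_sub_left (pow_le_of_le_one h0 h1.le (by omega)) 1)

theorem tsum_pow_succ_div_one_sub_pow_eq_tsum_pow_odd_div (h0 : 0 ≤ x) (h1 : x < 1) :
    ∑' n : ℕ, x ^ (n + 1) / (1 - x ^ (2 * (n + 1))) =
      ∑' k : ℕ, x ^ (2 * k + 1) / (1 - x ^ (2 * k + 1)) := by
  set f : ℕ → ℕ → ℝ := fun k n => (x ^ (2 * k + 1)) ^ (n + 1)
  have hrow (k : ℕ) : ∑' n, f k n = x ^ (2 * k + 1) / (1 - x ^ (2 * k + 1)) :=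
    tsum_pow_succ_of_lt_one (pow_nonneg h0 _) (pow_lt_one₀ h0 h1 (by omega))
  have hcol (n : ℕ) : ∑' k, f k n = x ^ (n + 1) / (1 - x ^ (2 * (n + 1))) := by
    have hswap (k : ℕ) : f k n = (x ^ (n + 1)) ^ (2 * k + 1) := by
      simp only [f, ← pow_mul, mul_comm]
    rw [tsum_congr hswap, tsum_pow_odd_of_lt_one (pow_nonneg h0 _) (pow_lt_one₀ h0 h1 (by omega)),
      ← pow_mul, mul_comm]
  have hf : Summable (uncurry f) := by
    refine (summable_prod_of_nonneg fun p => pow_nonneg (pow_nonneg h0 _) _).2 ⟨fun k => ?_, ?_⟩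
    · exact (summable_nat_add_iff (f := fun n => (x ^ (2 * k + 1)) ^ n) 1).2
        (summable_geometric_of_lt_one (pow_nonneg h0 _) (pow_lt_one₀ h0 h1 (by omega)))
    · exact (summable_pow_odd_div_one_sub h0 h1).congr fun k => (hrow k).symm
  calc ∑' n : ℕ, x ^ (n + 1) / (1 - x ^ (2 * (n + 1))) = ∑' n, ∑' k, f k n :=
        tsum_congr fun n => (hcol n).symm
    _ = ∑' k, ∑' n, f k n := hf.tsum_comm
    _ = _ := tsum_congr hrow

end Lambert

theorem odd_divisors_lt_distinct_parts (x : ℝ) (hx0 : 0 < x) (hx1 : x < 1) :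
    1 + ∑' n : ℕ, x ^ (n + 1) / (1 - x ^ (2 * (n + 1))) <
      ∏' n : ℕ, (1 + x ^ (n + 1)) := by
  have hden (k : ℕ) : 0 < 1 - x ^ (2 * k + 1) := sub_pos.2 (pow_lt_one₀ hx0.le hx1 (by omega))
  have hpos (k : ℕ) : 0 < x ^ (2 * k + 1) / (1 - x ^ (2 * k + 1)) :=
    div_pos (pow_pos hx0 _) (hden k)
  have hinv (k : ℕ) : (1 - x ^ (2 * k + 1))⁻¹ = 1 + x ^ (2 * k + 1) / (1 - x ^ (2 * k + 1)) := by
    field_simp [(hden k).ne']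
    ring
  rw [tsum_pow_succ_div_one_sub_pow_eq_tsum_pow_odd_div hx0.le hx1,
    tprod_one_add_pow_succ_eq_tprod_inv_one_sub_pow_odd (by rwa [Real.norm_of_nonneg hx0.le]),
    tprod_congr hinv]
  exact one_add_tsum_lt_tprod_one_add (fun k => (hpos k).le)
    (summable_pow_odd_div_one_sub hx0.le hx1) (hpos 0) (hpos 1)
end

section
/- The following double inequality holds: 1 + ∑_{n=1}^∞ 4^n/(4^{2n}−1) < ∏_{n=1}^∞ (1 + 1/4^n) < 15/11. -/
/-!
The terms of both the series and the product are dominated by a geometric progression of ratio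
`1/4`, so each is pinned down by a few initial terms plus a geometric tail: the series is at most
`4/15 + 16/255 + 1/45`, while the product lies between its fourth partial product
`1419925/1048576` and `(85/64) · exp (1/48) ≤ (85/64) · (48/47)`, using `∏ (1 + aₙ) ≤ exp (∑ aₙ)`
on the tail.
-/

open Real Finset

theorem Real.tprod_one_add_le_exp_tsum {ι : Type*} {f : ι → ℝ} (hf₀ : ∀ i, 0 ≤ f i)
    (hf : Summable f) : ∏' i, (1 + f i) ≤ exp (∑' i, f i) :=
  hasProd_le_of_prod_le (Real.multipliable_one_add_of_summable hf).hasProd fun s ↦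
    (prod_one_add_le_exp_sum s hf₀).trans (exp_le_exp.mpr (hf.sum_le_tsum s fun i _ ↦ hf₀ i))

theorem prod_range_le_tprod_of_one_le {α : Type*} [CommSemiring α] [PartialOrder α]
    [IsOrderedRing α] [TopologicalSpace α] [OrderClosedTopology α] {f : ℕ → α}
    (hf : ∀ n, 1 ≤ f n) (h : Multipliable f) (k : ℕ) : ∏ i ∈ range k, f i ≤ ∏' n, f n := by
  refine Monotone.ge_of_tendsto (monotone_nat_of_le_succ fun n ↦ ?_) h.hasProd.tendsto_prod_nat k
  rw [prod_range_succ]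
  exact le_mul_of_one_le_right (prod_nonneg fun i _ ↦ zero_le_one.trans (hf i)) (hf n)

section GeometricMajorant

variable {f : ℕ → ℝ} {C r : ℝ}

theorem summable_of_le_geometric (hr₀ : 0 ≤ r) (hr₁ : r < 1) (hf₀ : ∀ n, 0 ≤ f n)
    (hf : ∀ n, f n ≤ C * r ^ n) : Summable f :=
  .of_nonneg_of_le hf₀ hf ((summable_geometric_of_lt_one hr₀ hr₁).mul_left C)

theorem tsum_nat_add_le_of_le_geometric (hr₀ : 0 ≤ r) (hr₁ : r < 1) (hf₀ : ∀ n, 0 ≤ f n)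
    (hf : ∀ n, f n ≤ C * r ^ n) (k : ℕ) : ∑' n, f (n + k) ≤ C * r ^ k / (1 - r) := by
  have hgeom : HasSum (fun n ↦ C * r ^ k * r ^ n) (C * r ^ k / (1 - r)) := by
    simpa [div_eq_mul_inv] using (hasSum_geometric_of_lt_one hr₀ hr₁).mul_left (C * r ^ k)
  have hle : ∀ n, f (n + k) ≤ C * r ^ k * r ^ n := fun n ↦ by
    simpa [pow_add, mul_comm, mul_left_comm, mul_assoc] using hf (n + k)
  exact (Summable.of_nonneg_of_le (fun n ↦ hf₀ _) hle hgeom.summable).tsum_le_tsum hle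
    hgeom.summable |>.trans_eq hgeom.tsum_eq

theorem tsum_le_sum_range_add_of_le_geometric (hr₀ : 0 ≤ r) (hr₁ : r < 1) (hf₀ : ∀ n, 0 ≤ f n)
    (hf : ∀ n, f n ≤ C * r ^ n) (k : ℕ) :
    ∑' n, f n ≤ ∑ i ∈ range k, f i + C * r ^ k / (1 - r) := by
  rw [← (summable_of_le_geometric hr₀ hr₁ hf₀ hf).sum_add_tsum_nat_add k]
  exact add_le_add_right (tsum_nat_add_le_of_le_geometric hr₀ hr₁ hf₀ hf k) _

theorem tprod_one_add_le_prod_range_mul_of_le_geometric (hr₀ : 0 ≤ r) (hr₁ : r < 1)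
    (hf₀ : ∀ n, 0 ≤ f n) (hf : ∀ n, f n ≤ C * r ^ n) (k : ℕ) :
    ∏' n, (1 + f n) ≤ (∏ i ∈ range k, (1 + f i)) * exp (C * r ^ k / (1 - r)) := by
  have htail : Summable fun n ↦ f (n + k) :=
    (summable_nat_add_iff k).mpr (summable_of_le_geometric hr₀ hr₁ hf₀ hf)
  rw [← Multipliable.prod_mul_tprod_nat_mul' (f := fun n ↦ 1 + f n)
    (Real.multipliable_one_add_of_summable htail)]
  refine mul_le_mul_of_nonneg_left ?_ (prod_nonneg fun i _ ↦ by linarith [hf₀ i])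
  calc ∏' n, (1 + f (n + k)) ≤ exp (∑' n, f (n + k)) :=
        Real.tprod_one_add_le_exp_tsum (fun n ↦ hf₀ _) htail
    _ ≤ exp (C * r ^ k / (1 - r)) :=
        exp_le_exp.mpr (tsum_nat_add_le_of_le_geometric hr₀ hr₁ hf₀ hf k)

end GeometricMajorant

section DivSqSubOne

variable {K : Type*} [Field K] [LinearOrder K] [IsStrictOrderedRing K] {x : K}

theorem div_sq_sub_one_nonneg (hx : 1 ≤ x) : 0 ≤ x / (x ^ 2 - 1) :=
  div_nonneg (by linarith) (by nlinarith)

theorem div_sq_sub_one_le (hx : 4 ≤ x) : x / (x ^ 2 - 1) ≤ 16 / 15 / x := by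
  rw [div_le_div_iff₀ (by nlinarith) (by linarith)]
  nlinarith

end DivSqSubOne

theorem double_ineq_quarter :
    1 + ∑' n : ℕ, (4 : ℝ) ^ (n + 1) / ((4 : ℝ) ^ (2 * (n + 1)) - 1) <
      ∏' n : ℕ, (1 + 1 / (4 : ℝ) ^ (n + 1)) ∧
    ∏' n : ℕ, (1 + 1 / (4 : ℝ) ^ (n + 1)) < 15 / 11 := by
  have hpow (n : ℕ) : 4 ≤ (4 : ℝ) ^ (n + 1) := le_self_pow₀ (by norm_num) n.succ_ne_zero
  have hterm₀ (n : ℕ) : 0 ≤ (4 : ℝ) ^ (n + 1) / ((4 : ℝ) ^ (2 * (n + 1)) - 1) := by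
    rw [pow_mul']
    exact div_sq_sub_one_nonneg (by linarith [hpow n])
  have hterm (n : ℕ) :
      (4 : ℝ) ^ (n + 1) / ((4 : ℝ) ^ (2 * (n + 1)) - 1) ≤ 4 / 15 * (1 / 4) ^ n := by
    rw [pow_mul']
    refine (div_sq_sub_one_le (hpow n)).trans_eq ?_
    rw [pow_succ, one_div_pow]; field_simp; ring
  have hfactor₀ (n : ℕ) : 0 ≤ 1 / (4 : ℝ) ^ (n + 1) := by positivity
  have hfactor (n : ℕ) : 1 / (4 : ℝ) ^ (n + 1) ≤ 1 / 4 * (1 / 4) ^ n := by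
    rw [← pow_succ', one_div_pow]
  have hsum := tsum_le_sum_range_add_of_le_geometric (by norm_num) (by norm_num) hterm₀ hterm 2
  have hlower := prod_range_le_tprod_of_one_le (fun i ↦ by linarith [hfactor₀ i])
    (Real.multipliable_one_add_of_summable
      (summable_of_le_geometric (by norm_num) (by norm_num) hfactor₀ hfactor)) 4
  have hupper := tprod_one_add_le_prod_range_mul_of_le_geometric (by norm_num) (by norm_num)
    hfactor₀ hfactor 2
  have hexp : exp (1 / 4 * (1 / 4) ^ 2 / (1 - 1 / 4) : ℝ) ≤ 48 / 47 :=
    (exp_bound_div_one_sub_of_interval (by norm_num) (by norm_num)).trans_eq (by norm_num)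
  simp only [sum_range_succ, prod_range_succ, sum_range_zero, prod_range_zero] at hsum hlower hupper
  norm_num at hsum hlower hupper hexp ⊢
  constructor
  · linarith
  · nlinarith [exp_pos (1 / 48 : ℝ)]
end

section
/- For every positive integer n, q(n) − q(n−1) − q(n−2) ≤ 0, where q(m) = 0 for negative integers m and q(0) = 1. -/
/-!
An odd partition of `n + 2` either contains a part `1`, and deleting it gives an odd partition
of `n + 1`, or all its parts are at least `3`, and lowering its least part by `2` gives an odd
partition of `n`. Both maps are injective, since the lowered part is still the least one.
-/

/-- `q' m` is the number of partitions of `m` into odd parts, extended by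
`q' m = 0` for `m < 0` (and `q' 0 = 1`). -/
def q' (m : ℤ) : ℕ := if 0 ≤ m then (Nat.Partition.odds m.toNat).card else 0

open Finset Multiset Nat.Partition

namespace Multiset

noncomputable def decreaseMin (k : ℕ) (s : Multiset ℕ) : Multiset ℕ :=
  (sInf {a | a ∈ s} - k) ::ₘ s.erase (sInf {a | a ∈ s})

theorem sInf_mem_of_ne_zero {s : Multiset ℕ} (hs : s ≠ 0) : sInf {a | a ∈ s} ∈ s :=
  Nat.sInf_mem (exists_mem_of_ne_zero hs)

theorem sInf_sub_le_of_mem_decreaseMin {k : ℕ} {s : Multiset ℕ} {b : ℕ}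
    (hb : b ∈ decreaseMin k s) : sInf {a | a ∈ s} - k ≤ b := by
  rcases mem_cons.1 hb with rfl | hb
  · rfl
  · exact (Nat.sInf_le (mem_of_mem_erase hb)).trans' (Nat.sub_le _ _)

theorem decreaseMin_injOn (k : ℕ) :
    {s : Multiset ℕ | s ≠ 0 ∧ ∀ a ∈ s, k ≤ a}.InjOn (decreaseMin k) := by
  rintro s ⟨hs, hks⟩ t ⟨ht, hkt⟩ hst
  have hms := sInf_mem_of_ne_zero hs
  have hmt := sInf_mem_of_ne_zero ht
  have hle : sInf {a | a ∈ t} - k ≤ sInf {a | a ∈ s} - k :=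
    sInf_sub_le_of_mem_decreaseMin (hst ▸ mem_cons_self _ _)
  have hge : sInf {a | a ∈ s} - k ≤ sInf {a | a ∈ t} - k :=
    sInf_sub_le_of_mem_decreaseMin (hst ▸ mem_cons_self _ _)
  have hmin : sInf {a | a ∈ s} = sInf {a | a ∈ t} := by
    have := hks _ hms; have := hkt _ hmt; omega
  unfold decreaseMin at hst
  rw [hmin, cons_inj_right] at hst
  rw [← cons_erase hms, ← cons_erase hmt, hmin, hst]

theorem sum_decreaseMin {k : ℕ} {s : Multiset ℕ} (hs : s ≠ 0) (hks : ∀ a ∈ s, k ≤ a) :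
    (decreaseMin k s).sum = s.sum - k := by
  have hm := sInf_mem_of_ne_zero hs
  have := sum_erase hm
  have := hks _ hm
  rw [decreaseMin, sum_cons]
  omega

end Multiset

namespace Nat.Partition

theorem mem_image_parts_odds {n : ℕ} {s : Multiset ℕ} :
    s ∈ (odds n).image parts ↔ (∀ a ∈ s, Odd a) ∧ s.sum = n := by
  simp only [mem_image, odds, restricted, Finset.mem_filter, Finset.mem_univ, true_and,
    Nat.not_even_iff_odd]
  constructor
  · rintro ⟨p, hp, rfl⟩
    exact ⟨hp, p.parts_sum⟩
  · rintro ⟨hs, rfl⟩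
    exact ⟨⟨s, fun h => (hs _ h).pos, rfl⟩, hs, rfl⟩

theorem card_image_parts_odds (n : ℕ) : #((odds n).image parts) = #(odds n) :=
  Finset.card_image_of_injective _ fun _ _ => Nat.Partition.ext

theorem card_filter_one_mem_le (n : ℕ) :
    #{s ∈ (odds (n + 1)).image parts | 1 ∈ s} ≤ #((odds n).image parts) := by
  refine card_le_card_of_injOn (·.erase 1) ?_ ?_
  · intro s hs
    simp only [coe_filter, mem_image_parts_odds, Set.mem_ofPred_eq, Finset.mem_coe] at hs ⊢
    obtain ⟨⟨hodd, hsum⟩, h1⟩ := hs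
    have := sum_erase h1
    exact ⟨fun a ha => hodd a (mem_of_mem_erase ha), by omega⟩
  · intro s hs t ht hst
    simp only [coe_filter, Set.mem_ofPred_eq] at hs ht
    rw [← cons_erase hs.2, ← cons_erase ht.2]
    exact congrArg _ hst

theorem card_filter_one_notMem_le (n : ℕ) :
    #{s ∈ (odds (n + 2)).image parts | 1 ∉ s} ≤ #((odds n).image parts) := by
  have hS : ∀ s ∈ {s ∈ (odds (n + 2)).image parts | 1 ∉ s},
      (∀ a ∈ s, Odd a) ∧ s.sum = n + 2 ∧ s ≠ 0 ∧ ∀ a ∈ s, 2 ≤ a := by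
    intro s hs
    rw [Finset.mem_filter, mem_image_parts_odds] at hs
    obtain ⟨⟨hodd, hsum⟩, h1⟩ := hs
    refine ⟨hodd, hsum, by rintro rfl; simp at hsum, fun a ha => ?_⟩
    obtain ⟨j, rfl⟩ := hodd a ha
    rcases j with _ | j
    · exact absurd ha h1
    · omega
  refine card_le_card_of_injOn (decreaseMin 2) (fun s hs => ?_)
    ((decreaseMin_injOn 2).mono fun s hs => (hS s hs).2.2)
  obtain ⟨hodd, hsum, hs0, h2⟩ := hS s hs
  rw [Finset.mem_coe, mem_image_parts_odds, sum_decreaseMin hs0 h2, hsum]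
  refine ⟨fun a ha => ?_, rfl⟩
  have hm := sInf_mem_of_ne_zero hs0
  rcases mem_cons.1 ha with rfl | ha
  · exact Nat.Odd.sub_even (h2 _ hm) (hodd _ hm) even_two
  · exact hodd a (mem_of_mem_erase ha)

theorem card_odds_add_two_le (n : ℕ) :
    #(odds (n + 2)) ≤ #(odds (n + 1)) + #(odds n) := by
  simp only [← card_image_parts_odds]
  rw [← card_filter_add_card_filter_not (p := (1 ∈ ·))]
  exact add_le_add (card_filter_one_mem_le _) (card_filter_one_notMem_le _)

end Nat.Partition

theorem q'_natCast (m : ℕ) : q' m = #(odds m) := by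
  simp [q']

theorem q_sub_q_sub_q_nonpos (n : ℤ) (hn : 0 < n) :
    (q' n : ℤ) - (q' (n - 1) : ℤ) - (q' (n - 2) : ℤ) ≤ 0 := by
  obtain ⟨m, rfl | rfl⟩ : ∃ m : ℕ, n = 1 ∨ n = (m + 2 : ℕ) := by
    rcases (by omega : n = 1 ∨ 2 ≤ n) with h | h
    exacts [⟨0, .inl h⟩, ⟨n.toNat - 2, .inr (by omega)⟩]
  · simp [q', odds, restricted]
  · rw [show ((m + 2 : ℕ) : ℤ) - 1 = (m + 1 : ℕ) by omega,
      show ((m + 2 : ℕ) : ℤ) - 2 = (m : ℕ) by omega, q'_natCast, q'_natCast, q'_natCast]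
    have := card_odds_add_two_le m
    omega
end

section
/- For all nonnegative integers k and n, S_{n+2,k+1} = S_{n+1,k} + S_{n,k}, where S_{n,k} = ∑_{j=0}^{k} C(k,j) q(n−k−j). -/
/-- `S n k = ∑_{j=0}^{k} C(k,j) q(n-k-j)`. -/
def S (n : ℤ) (k : ℕ) : ℕ := ∑ j ∈ Finset.range (k + 1), k.choose j * q' (n - k - j)

open Finset

/-- Pascal's rule `C(k+1,j) = C(k,j) + C(k,j-1)`: the `C(k,j-1)` part, reindexed by `j ↦ j+1`,
is the sum at `n` instead of `n + 1`. -/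
theorem sum_choose_succ_mul_apply_sub {R : Type*} [NonAssocSemiring R] (g : ℤ → R) (n : ℤ)
    (k : ℕ) :
    ∑ j ∈ range (k + 2), ((k + 1).choose j : R) * g (n + 2 - (k + 1 : ℕ) - j) =
      ∑ j ∈ range (k + 1), (k.choose j : R) * g (n + 1 - k - j) +
        ∑ j ∈ range (k + 1), (k.choose j : R) * g (n - k - j) := by
  convert sum_choose_succ_mul (fun i _ => g (n + 1 - k - i)) k using 4 with j _ j _
  · push_cast; ring
  · congr 1; push_cast; ring

theorem S_recurrence (k n : ℕ) :
    S ((n : ℤ) + 2) (k + 1) = S ((n : ℤ) + 1) k + S (n : ℤ) k :=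
  sum_choose_succ_mul_apply_sub q' n k
end
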